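/- arXiv:2410.02943 — 4 statements merged into one kernel-verified Lean document; each statement's English description precedes it below -/
import Mathlib

section
/- Let d >= 1, n >= 2 and 0 < a < n with gcd(a,n) = 1, and let (e_1,...,e_r) be a sequence of integers, each >= 2, with [e_1,...,e_r] = d*n^2/(d*n*a - 1). Then [2, e_1, ..., e_{r-1}, e_r + 1] = d*(2n-a)^2/(d*(2n-a)*n - 1) and [e_1 + 1, e_2, ..., e_r, 2] = d*(n+a)^2/(d*(n+a)*a - 1). In particular, since 0 < n < 2n-a with gcd(n, 2n-a) = 1 and 0 < a < n+a with gcd(a, n+a) = 1, both augmented sequences are again T-chains for the same d, of types (d, 2n-a, n) and (d, n+a, a) respectively. -/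
/-- Hirzebruch-Jung continued fraction value `[e₁,...,e_r] = e₁ - 1/[e₂,...,e_r]`. -/
def hjVal : List ℤ → ℚ
  | [] => 0
  | e :: l => (e : ℚ) - 1 / hjVal l

/-- Add `1` to the first entry of a list. -/
def plusFirst : List ℤ → List ℤ
  | [] => []
  | e :: l => (e + 1) :: l

/-- Add `1` to the last entry of a list. -/
def plusLast : List ℤ → List ℤ
  | [] => []
  | [e] => [e + 1]
  | e :: l => e :: plusLast l

/-- `e` is a T-chain of type `(d,n,a)`. -/
def IsTChain (d n a : ℤ) (e : List ℤ) : Prop :=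
  1 ≤ d ∧ 2 ≤ n ∧ 0 < a ∧ a < n ∧ Int.gcd a n = 1 ∧
  (∀ x ∈ e, 2 ≤ x) ∧
  hjVal e = ((d * n ^ 2 : ℤ) : ℚ) / ((d * n * a - 1 : ℤ) : ℚ)

/-- product of the matrices [[x,-1],[1,0]]: (p, q, s, t) with columns (p,q), (s,t). -/
def hjM : List ℤ → ℤ × ℤ × ℤ × ℤ
  | [] => (1, 0, 0, 1)
  | x :: l =>
    (x * (hjM l).1 - (hjM l).2.1, (hjM l).1,
     x * (hjM l).2.2.1 - (hjM l).2.2.2, (hjM l).2.2.1)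

lemma hjM_cons (x : ℤ) (l : List ℤ) :
    hjM (x :: l) =
    (x * (hjM l).1 - (hjM l).2.1, (hjM l).1,
     x * (hjM l).2.2.1 - (hjM l).2.2.2, (hjM l).2.2.1) := rfl

lemma hjM_det : ∀ e : List ℤ,
    (hjM e).1 * (hjM e).2.2.2 - (hjM e).2.1 * (hjM e).2.2.1 = 1
  | [] => by simp [hjM]
  | x :: l => by
    have ih := hjM_det l
    simp only [hjM]
    linear_combination ih

lemma hjM_inv : ∀ e : List ℤ, e ≠ [] → (∀ x ∈ e, 2 ≤ x) →
    1 ≤ (hjM e).2.1 + (hjM e).2.2.2 ∧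
    (hjM e).2.1 + (hjM e).2.2.2 ≤ (hjM e).1 + (hjM e).2.2.1 ∧
    (hjM e).2.2.1 ≤ (hjM e).2.2.2 ∧ (hjM e).2.2.2 ≤ 0 ∧
    (hjM e).2.1 < (hjM e).1
  | [], h, _ => absurd rfl h
  | [x], _, h2 => by
    have hx := h2 x (by simp)
    simp [hjM]
    omega
  | x :: y :: l, _, h2 => by
    have hx : (2:ℤ) ≤ x := h2 x (by simp)
    obtain ⟨i1, i2, i3, i4, i5⟩ := hjM_inv (y :: l) (by simp)
      (fun z hz => h2 z (List.mem_cons_of_mem x hz))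
    set p := (hjM (y :: l)).1
    set q := (hjM (y :: l)).2.1
    set s := (hjM (y :: l)).2.2.1
    set t := (hjM (y :: l)).2.2.2 with ht
    simp only [hjM_cons x (y :: l)]
    refine ⟨by linarith, ?_, ?_, by linarith, ?_⟩
    · nlinarith [mul_nonneg (by linarith : (0:ℤ) ≤ x - 2) (by linarith : (0:ℤ) ≤ p + s)]
    · nlinarith [mul_nonneg (by linarith : (0:ℤ) ≤ x - 2) (by linarith : (0:ℤ) ≤ -s)]
    · nlinarith [mul_nonneg (by linarith : (0:ℤ) ≤ x - 2) (by linarith : (0:ℤ) ≤ p)]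

lemma hjVal_eq : ∀ e : List ℤ, (∀ x ∈ e, 2 ≤ x) →
    hjVal e = ((hjM e).1 : ℚ) / ((hjM e).2.1 : ℚ)
  | [], _ => by simp [hjVal, hjM]
  | [x], _ => by simp [hjVal, hjM]
  | x :: y :: l, h2 => by
    have htail : ∀ z ∈ y :: l, 2 ≤ z := fun z hz => h2 z (List.mem_cons_of_mem x hz)
    have ih := hjVal_eq (y :: l) htail
    obtain ⟨i1, i2, i3, i4, i5⟩ := hjM_inv (y :: l) (by simp) htail
    have hq1 : 1 ≤ (hjM (y :: l)).2.1 := by linarith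
    have hp1 : 1 ≤ (hjM (y :: l)).1 := by linarith
    have hp0 : ((hjM (y :: l)).1 : ℚ) ≠ 0 := by
      exact_mod_cast (by omega : (hjM (y :: l)).1 ≠ 0)
    have hq0 : ((hjM (y :: l)).2.1 : ℚ) ≠ 0 := by
      exact_mod_cast (by omega : (hjM (y :: l)).2.1 ≠ 0)
    have key : hjVal (x :: y :: l) = (x : ℚ) - 1 / hjVal (y :: l) := rfl
    have e1 : (hjM (x :: y :: l)).1 = x * (hjM (y :: l)).1 - (hjM (y :: l)).2.1 := rfl
    have e2 : (hjM (x :: y :: l)).2.1 = (hjM (y :: l)).1 := rfl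
    rw [key, ih, e1, e2]
    push_cast
    field_simp

lemma hjM_plusLast : ∀ e : List ℤ, e ≠ [] →
    hjM (plusLast e) =
      ((hjM e).1 - (hjM e).2.2.1, (hjM e).2.1 - (hjM e).2.2.2,
       (hjM e).2.2.1, (hjM e).2.2.2)
  | [], h => absurd rfl h
  | [x], _ => by
    show hjM [x + 1] = _
    rw [show hjM [x + 1] = (x + 1, 1, -1, 0) from by norm_num [hjM],
      show hjM [x] = (x, 1, -1, 0) from by norm_num [hjM]]
    norm_num
  | x :: y :: l, _ => by
    have ih := hjM_plusLast (y :: l) (by simp)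
    have hpl : plusLast (x :: y :: l) = x :: plusLast (y :: l) := rfl
    rw [hpl, hjM_cons x (plusLast (y :: l)), ih, hjM_cons x (y :: l)]
    rw [Prod.mk.injEq, Prod.mk.injEq, Prod.mk.injEq]
    refine ⟨by ring, by ring, by ring, by ring⟩

lemma hjM_append_two : ∀ e : List ℤ,
    hjM (e ++ [2]) =
      (2 * (hjM e).1 + (hjM e).2.2.1, 2 * (hjM e).2.1 + (hjM e).2.2.2,
       -(hjM e).1, -(hjM e).2.1)
  | [] => by norm_num [hjM]
  | x :: l => by
    have ih := hjM_append_two l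
    have h : (x :: l) ++ [2] = x :: (l ++ [2]) := rfl
    rw [h, hjM_cons x (l ++ [2]), ih, hjM_cons x l]
    rw [Prod.mk.injEq, Prod.mk.injEq, Prod.mk.injEq]
    refine ⟨by ring, by ring, by ring, by ring⟩

lemma hjM_plusFirst (e : List ℤ) (h : e ≠ []) :
    hjM (plusFirst e) =
      ((hjM e).1 + (hjM e).2.1, (hjM e).2.1,
       (hjM e).2.2.1 + (hjM e).2.2.2, (hjM e).2.2.2) := by
  cases e with
  | nil => exact absurd rfl h
  | cons x l =>
    have h1 : plusFirst (x :: l) = (x + 1) :: l := rfl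
    rw [h1, hjM_cons (x + 1) l, hjM_cons x l]
    rw [Prod.mk.injEq, Prod.mk.injEq, Prod.mk.injEq]
    refine ⟨by ring, rfl, by ring, rfl⟩

lemma plusLast_mem : ∀ e : List ℤ, (∀ x ∈ e, 2 ≤ x) → ∀ x ∈ plusLast e, 2 ≤ x
  | [], _, x, hx => by simp [plusLast] at hx
  | [a], h, x, hx => by
    simp [plusLast] at hx
    have := h a (by simp)
    omega
  | a :: b :: l, h, x, hx => by
    have : plusLast (a :: b :: l) = a :: plusLast (b :: l) := rfl
    rw [this] at hx
    rcases List.mem_cons.mp hx with h1 | h1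
    · exact h1 ▸ h a (by simp)
    · exact plusLast_mem (b :: l) (fun z hz => h z (List.mem_cons_of_mem a hz)) x h1

lemma plusFirst_mem (e : List ℤ) (h : ∀ x ∈ e, 2 ≤ x) : ∀ x ∈ plusFirst e, 2 ≤ x := by
  cases e with
  | nil => simp [plusFirst]
  | cons a l =>
    intro x hx
    rcases List.mem_cons.mp hx with h1 | h1
    · have := h a (by simp); omega
    · exact h x (List.mem_cons_of_mem a h1)


/-- Augmenting a T-chain of type `(d,n,a)` by a leading `2` (adding `1` to the last entry)
or a trailing `2` (adding `1` to the first entry) yields T-chains of types `(d,2n-a,n)` and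
`(d,n+a,a)` respectively. -/
theorem t_chain_augmentation (d n a : ℤ) (hd : 1 ≤ d) (hn : 2 ≤ n)
    (ha0 : 0 < a) (han : a < n) (hgcd : Int.gcd a n = 1)
    (e : List ℤ) (he2 : ∀ x ∈ e, 2 ≤ x)
    (hval : hjVal e = ((d * n ^ 2 : ℤ) : ℚ) / ((d * n * a - 1 : ℤ) : ℚ)) :
    hjVal (2 :: plusLast e)
      = ((d * (2 * n - a) ^ 2 : ℤ) : ℚ) / ((d * (2 * n - a) * n - 1 : ℤ) : ℚ) ∧
    hjVal (plusFirst e ++ [2])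
      = ((d * (n + a) ^ 2 : ℤ) : ℚ) / ((d * (n + a) * a - 1 : ℤ) : ℚ) ∧
    IsTChain d (2 * n - a) n (2 :: plusLast e) ∧
    IsTChain d (n + a) a (plusFirst e ++ [2]) := by
  have hdn : 2 ≤ d * n := by nlinarith
  have hdna : 1 ≤ d * n * a := by nlinarith
  have hDpos : (0 : ℤ) < d * n * a - 1 := by nlinarith
  have hNpos : (0 : ℤ) < d * n ^ 2 := by positivity
  have hDq : ((d * n * a - 1 : ℤ) : ℚ) ≠ 0 := by exact_mod_cast hDpos.ne'
  have hne : e ≠ [] := by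
    intro h; subst h
    rw [show hjVal [] = 0 from rfl] at hval
    have hpos : (0 : ℚ) < ((d * n ^ 2 : ℤ) : ℚ) / ((d * n * a - 1 : ℤ) : ℚ) :=
      div_pos (by exact_mod_cast hNpos) (by exact_mod_cast hDpos)
    rw [← hval] at hpos; exact lt_irrefl 0 hpos
  obtain ⟨i1, i2, i3, i4, i5⟩ := hjM_inv e hne he2
  have hdet := hjM_det e
  set p := (hjM e).1 with hp
  set q := (hjM e).2.1 with hq
  set s := (hjM e).2.2.1 with hs
  set t := (hjM e).2.2.2 with ht
  have hq1 : 1 ≤ q := by linarith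
  have hp2 : 2 ≤ p := by linarith
  have hq0 : (q : ℚ) ≠ 0 := by exact_mod_cast (by omega : q ≠ 0)
  rw [hjVal_eq e he2] at hval
  have hcross : p * (d * n * a - 1) = d * n ^ 2 * q := by
    have h := (div_eq_div_iff hq0 hDq).mp hval
    exact_mod_cast h
  have cop : IsCoprime p q := ⟨t, -s, by linear_combination hdet⟩
  have cop2 : IsCoprime (d * n ^ 2) (d * n * a - 1) :=
    ⟨d * a ^ 2, -(d * n * a + 1), by ring⟩
  have hpN : p = d * n ^ 2 := by
    apply Int.dvd_antisymm (by linarith) (by linarith)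
    · exact cop.dvd_of_dvd_mul_right ⟨d * n * a - 1, by linarith [hcross]⟩
    · exact cop2.dvd_of_dvd_mul_right ⟨q, by linarith [hcross]⟩
  rw [hpN] at hcross
  have hqD : q = d * n * a - 1 :=
    (mul_left_cancel₀ hNpos.ne' hcross).symm
  have hdet2' : p * (d * a ^ 2 + 1 - d * n * a) - q * (d * n * a + 1 - d * n ^ 2) = 1 := by
    rw [hpN, hqD]; ring
  have hdvd : p ∣ s - (d * n * a + 1 - d * n ^ 2) := by
    apply cop.dvd_of_dvd_mul_left
    exact ⟨t - (d * a ^ 2 + 1 - d * n * a), by linear_combination hdet2' - hdet⟩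
  have hS0 : d * n * a + 1 - d * n ^ 2 ≤ 0 := by
    have h := mul_le_mul_of_nonneg_left (show a + 1 ≤ n by linarith)
      (show (0 : ℤ) ≤ d * n by linarith)
    nlinarith [h]
  have hSp : -p < d * n * a + 1 - d * n ^ 2 := by
    rw [hpN]; linarith
  have hsS : s = d * n * a + 1 - d * n ^ 2 := by
    by_contra hne'
    have h0 : s - (d * n * a + 1 - d * n ^ 2) ≠ 0 := sub_ne_zero.mpr hne'
    have hle := Int.le_of_dvd (abs_pos.mpr h0) ((dvd_abs _ _).mpr hdvd)
    have habs : |s - (d * n * a + 1 - d * n ^ 2)| < p := by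
      rw [abs_lt]
      constructor <;> linarith
    linarith
  have htT : t = d * a ^ 2 + 1 - d * n * a := by
    have hp0 : p ≠ 0 := by omega
    apply mul_left_cancel₀ hp0
    linear_combination hdet - hdet2' + q * hsS
  have hmem1 : ∀ x ∈ 2 :: plusLast e, 2 ≤ x := by
    intro x hx
    rcases List.mem_cons.mp hx with h | h
    · omega
    · exact plusLast_mem e he2 x h
  have hmem2 : ∀ x ∈ plusFirst e ++ [2], 2 ≤ x := by
    intro x hx
    rcases List.mem_append.mp hx with h | h
    · exact plusFirst_mem e he2 x h
    · simp at h; omega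
  have hPL := hjM_plusLast e hne
  have hval1 : hjVal (2 :: plusLast e)
      = ((d * (2 * n - a) ^ 2 : ℤ) : ℚ) / ((d * (2 * n - a) * n - 1 : ℤ) : ℚ) := by
    rw [hjVal_eq _ hmem1]
    have e1 : (hjM (2 :: plusLast e)).1 = 2 * (p - s) - (q - t) := by
      rw [show (hjM (2 :: plusLast e)).1
          = 2 * (hjM (plusLast e)).1 - (hjM (plusLast e)).2.1 from rfl, hPL]
    have e2 : (hjM (2 :: plusLast e)).2.1 = p - s := by
      rw [show (hjM (2 :: plusLast e)).2.1 = (hjM (plusLast e)).1 from rfl, hPL]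
    rw [e1, e2, hpN, hqD, hsS, htT]
    congr 1 <;> push_cast <;> ring
  have hval2 : hjVal (plusFirst e ++ [2])
      = ((d * (n + a) ^ 2 : ℤ) : ℚ) / ((d * (n + a) * a - 1 : ℤ) : ℚ) := by
    rw [hjVal_eq _ hmem2]
    have hPF := hjM_plusFirst e hne
    have hA2 := hjM_append_two (plusFirst e)
    rw [hPF] at hA2
    have e1 : (hjM (plusFirst e ++ [2])).1 = 2 * (p + q) + (s + t) := by rw [hA2]
    have e2 : (hjM (plusFirst e ++ [2])).2.1 = 2 * q + t := by rw [hA2]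
    rw [e1, e2, hpN, hqD, hsS, htT]
    congr 1 <;> push_cast <;> ring
  have hco : IsCoprime a n := Int.isCoprime_iff_gcd_eq_one.mpr hgcd
  have g1 : Int.gcd n (2 * n - a) = 1 := by
    rw [← Int.isCoprime_iff_gcd_eq_one]
    have h1 : IsCoprime n (-a) := hco.symm.neg_right
    have h2 := h1.add_mul_left_right 2
    rwa [show -a + n * 2 = 2 * n - a from by ring] at h2
  have g2 : Int.gcd a (n + a) = 1 := by
    rw [← Int.isCoprime_iff_gcd_eq_one]
    have h2 := hco.add_mul_left_right 1
    rwa [mul_one] at h2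
  refine ⟨hval1, hval2, ?_, ?_⟩
  · exact ⟨hd, by omega, by omega, by omega, g1, hmem1, hval1⟩
  · exact ⟨hd, by omega, by omega, by omega, g2, hmem2, hval2⟩
end

section
/- Fix an integer d >= 1 and define inductively a set T_d of finite integer sequences: the initial sequence is (4) if d = 1, and (3,2,...,2,3) with d-2 twos in the middle if d >= 2; and T_d is closed under the two operations (e_1,...,e_r) |-> (2, e_1, ..., e_{r-1}, e_r + 1) and (e_1,...,e_r) |-> (e_1 + 1, e_2, ..., e_r, 2). Then every T-chain of type (d,n,a) belongs to T_d; that is, every sequence of integers >= 2 whose Hirzebruch-Jung value equals d*n^2/(d*n*a - 1) for some n >= 2, 0 < a < n with gcd(a,n) = 1, is obtained from the initial sequence by finitely many applications of the two operations. -/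
/-- The inductively defined family `T_d`: it contains the initial chain (`[4]` for `d = 1`,
`[3,2,...,2,3]` with `d-2` twos for `d ≥ 2`) and is closed under the two augmentation
operations `(e₁,...,e_r) ↦ (2,e₁,...,e_{r-1},e_r+1)` and `(e₁,...,e_r) ↦ (e₁+1,e₂,...,e_r,2)`. -/
inductive InTd (d : ℕ) : List ℤ → Prop
  | init : InTd d (if d = 1 then [4] else 3 :: (List.replicate (d - 2) (2 : ℤ) ++ [3]))
  | left {e : List ℤ} : InTd d e → InTd d (2 :: plusLast e)
  | right {e : List ℤ} : InTd d e → InTd d (plusFirst e ++ [2])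

/-! Write `hjMatrix e` for the product of the matrices `!![eᵢ, -1; 1, 0]`; its first column is
the numerator and denominator of `hjVal e`. The two operations of `T_d` multiply this matrix by a
unipotent matrix on the left and on the right, and they turn the matrix of type `(d, n - a, a)`
(if `2a < n`) resp. `(d, a, 2a - n)` (if `2a > n`) into that of type `(d, n, a)`. Descending on
`n` down to type `(d, 2, 1)`, realised by the initial chain, every type is realised by a chain
of `T_d`. A chain with entries `≥ 2` is determined by its value (its first entry is the ceiling),
so the given T-chain is that chain. -/

def hjStep (e : ℤ) : Matrix (Fin 2) (Fin 2) ℤ := !![e, -1; 1, 0]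

def hjMatrix (l : List ℤ) : Matrix (Fin 2) (Fin 2) ℤ := (l.map hjStep).prod

@[simp]
lemma hjMatrix_nil : hjMatrix [] = 1 := rfl

@[simp]
lemma hjMatrix_cons (e : ℤ) (l : List ℤ) : hjMatrix (e :: l) = hjStep e * hjMatrix l := by
  simp [hjMatrix]

@[simp]
lemma hjMatrix_append (l l' : List ℤ) : hjMatrix (l ++ l') = hjMatrix l * hjMatrix l' := by
  simp [hjMatrix]

lemma hjStep_add_one (e : ℤ) : hjStep (e + 1) = !![1, 1; 0, 1] * hjStep e := by
  simp [hjStep]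

lemma hjStep_add_one' (e : ℤ) : hjStep (e + 1) = hjStep e * !![1, 0; -1, 1] := by
  simp [hjStep]

lemma hjMatrix_plusFirst {l : List ℤ} (hl : l ≠ []) :
    hjMatrix (plusFirst l) = !![1, 1; 0, 1] * hjMatrix l := by
  obtain ⟨e, t, rfl⟩ := List.exists_cons_of_ne_nil hl
  simp [plusFirst, hjStep_add_one]

lemma hjMatrix_plusLast {l : List ℤ} (hl : l ≠ []) :
    hjMatrix (plusLast l) = hjMatrix l * !![1, 0; -1, 1] := by
  induction l with
  | nil => exact absurd rfl hl
  | cons e t ih =>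
    cases t with
    | nil => simp [plusLast, hjStep_add_one']
    | cons f s =>
      change hjMatrix (e :: plusLast (f :: s)) = _
      rw [hjMatrix_cons, ih (List.cons_ne_nil f s), hjMatrix_cons e, Matrix.mul_assoc]

lemma hjVal_cons_mem_Ioc (a : ℤ) {t : List ℤ} (ht : ∀ x ∈ t, 2 ≤ x) :
    hjVal (a :: t) ∈ Set.Ioc ((a : ℚ) - 1) a := by
  induction t generalizing a with
  | nil => simp [hjVal]
  | cons b s ih =>
    have hb : (2 : ℚ) ≤ b := by exact_mod_cast ht b List.mem_cons_self
    have htail := (ih b fun x hx => ht x (List.mem_cons_of_mem b hx)).1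
    have hpos : 0 < 1 / hjVal (b :: s) := by apply one_div_pos.mpr; linarith
    have hlt : 1 / hjVal (b :: s) < 1 := by rw [div_lt_one] <;> linarith
    constructor <;> simp only [hjVal] at hpos hlt ⊢ <;> linarith

lemma ceil_hjVal_cons (a : ℤ) {t : List ℤ} (ht : ∀ x ∈ t, 2 ≤ x) : ⌈hjVal (a :: t)⌉ = a :=
  Int.ceil_eq_iff.mpr (hjVal_cons_mem_Ioc a ht)

lemma one_lt_hjVal {l : List ℤ} (hl : l ≠ []) (h : ∀ x ∈ l, 2 ≤ x) : 1 < hjVal l := by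
  obtain ⟨a, t, rfl⟩ := List.exists_cons_of_ne_nil hl
  have ha : (2 : ℚ) ≤ a := by exact_mod_cast h a List.mem_cons_self
  linarith [(hjVal_cons_mem_Ioc a fun x hx => h x (List.mem_cons_of_mem a hx)).1]

theorem hjVal_injOn : Set.InjOn hjVal {l | ∀ x ∈ l, 2 ≤ x} := by
  intro l hl l' hl' hv
  induction l generalizing l' with
  | nil =>
    cases l' with
    | nil => rfl
    | cons b s =>
      have h0 : hjVal [] = 0 := rfl
      linarith [one_lt_hjVal (List.cons_ne_nil b s) hl']
  | cons a t ih =>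
    cases l' with
    | nil =>
      have h0 : hjVal [] = 0 := rfl
      linarith [one_lt_hjVal (List.cons_ne_nil a t) hl]
    | cons b s =>
      have ht : ∀ x ∈ t, 2 ≤ x := fun x hx => hl x (List.mem_cons_of_mem a hx)
      have hs : ∀ x ∈ s, 2 ≤ x := fun x hx => hl' x (List.mem_cons_of_mem b hx)
      have hab : a = b := by rw [← ceil_hjVal_cons a ht, hv, ceil_hjVal_cons b hs]
      subst hab
      have htail : hjVal t = hjVal s := by simpa [hjVal] using hv
      rw [ih ht hs htail]

lemma hjMatrix_lt (l : List ℤ) (h : ∀ x ∈ l, 2 ≤ x) :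
    0 ≤ hjMatrix l 1 0 ∧ hjMatrix l 1 0 < hjMatrix l 0 0 := by
  induction l with
  | nil => simp
  | cons e t ih =>
    have he := h e List.mem_cons_self
    obtain ⟨h0, h1⟩ := ih fun x hx => h x (List.mem_cons_of_mem e hx)
    simp [hjStep, Matrix.mul_apply, Fin.sum_univ_two]
    constructor <;> nlinarith

lemma hjVal_eq_div (l : List ℤ) (h : ∀ x ∈ l, 2 ≤ x) :
    hjVal l = hjMatrix l 0 0 / hjMatrix l 1 0 := by
  induction l with
  | nil => simp [hjVal]
  | cons e t ih =>
    have ht : ∀ x ∈ t, 2 ≤ x := fun x hx => h x (List.mem_cons_of_mem e hx)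
    have hA : (hjMatrix t 0 0 : ℚ) ≠ 0 := by
      have := hjMatrix_lt t ht; exact_mod_cast (by omega : hjMatrix t 0 0 ≠ 0)
    simp [hjVal, ih ht, hjStep, Matrix.mul_apply, Fin.sum_univ_two]
    field_simp
    ring

lemma le_of_mem_plusFirst {b : ℤ} {l : List ℤ} (h : ∀ x ∈ l, b ≤ x) :
    ∀ x ∈ plusFirst l, b ≤ x := by
  cases l with
  | nil => simp [plusFirst]
  | cons e t =>
    simp only [plusFirst, List.mem_cons, forall_eq_or_imp] at h ⊢
    exact ⟨by linarith [h.1], h.2⟩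

lemma le_of_mem_plusLast {b : ℤ} {l : List ℤ} (h : ∀ x ∈ l, b ≤ x) :
    ∀ x ∈ plusLast l, b ≤ x := by
  induction l with
  | nil => simp [plusLast]
  | cons e t ih =>
    simp only [List.mem_cons, forall_eq_or_imp] at h
    cases t with
    | nil => simp [plusLast]; linarith [h.1]
    | cons f s =>
      change ∀ x ∈ e :: plusLast (f :: s), b ≤ x
      simpa using ⟨h.1, ih h.2⟩

namespace InTd

variable {d : ℕ} {c : List ℤ}

lemma ne_nil (h : InTd d c) : c ≠ [] := by
  cases h with
  | init => split_ifs <;> simp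
  | left => simp
  | right => simp

lemma two_le (h : InTd d c) : ∀ x ∈ c, 2 ≤ x := by
  induction h with
  | init =>
    split_ifs
    · simp
    · intro x hx
      simp only [List.mem_cons, List.mem_append, List.mem_replicate, List.not_mem_nil, or_false] at hx
      obtain rfl | ⟨-, rfl⟩ | rfl := hx <;> norm_num
  | left _ ih => simpa using le_of_mem_plusLast ih
  | right _ ih => simpa [or_imp, forall_and] using le_of_mem_plusFirst ih

end InTd

/-- The continuant matrix of every T-chain of type `(d, n, a)`. -/
def tMatrix (d : ℕ) (n a : ℤ) : Matrix (Fin 2) (Fin 2) ℤ :=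
  !![d * n ^ 2, -(d * n * (n - a) - 1); d * n * a - 1, -(d * a * (n - a) - 1)]

lemma tMatrix_right (d : ℕ) (n a : ℤ) :
    !![1, 1; 0, 1] * tMatrix d (n - a) a * hjStep 2 = tMatrix d n a := by
  simp only [tMatrix, hjStep, Matrix.mul_fin_two]
  ring_nf

lemma tMatrix_left (d : ℕ) (n a : ℤ) :
    hjStep 2 * (tMatrix d a (2 * a - n) * !![1, 0; -1, 1]) = tMatrix d n a := by
  simp only [tMatrix, hjStep, Matrix.mul_fin_two]
  ring_nf

lemma hjMatrix_replicate_two (k : ℕ) :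
    hjMatrix (List.replicate k 2) = !![(k : ℤ) + 1, -k; k, 1 - k] := by
  induction k with
  | zero => ext i j; fin_cases i <;> fin_cases j <;> simp
  | succ k ih =>
    rw [List.replicate_succ, hjMatrix_cons, ih]
    simp only [hjStep, Matrix.mul_fin_two]
    push_cast
    ring_nf

lemma hjMatrix_init {d : ℕ} (hd : 1 ≤ d) :
    hjMatrix (if d = 1 then [4] else 3 :: (List.replicate (d - 2) (2 : ℤ) ++ [3])) =
      tMatrix d 2 1 := by
  split_ifs with hd1
  · subst hd1
    simp only [hjMatrix_cons, hjMatrix_nil, Matrix.mul_one, hjStep, tMatrix]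
    norm_num
  · obtain ⟨k, rfl⟩ : ∃ k, d = k + 2 := ⟨d - 2, by omega⟩
    simp only [Nat.add_sub_cancel, hjMatrix_cons, hjMatrix_append, hjMatrix_replicate_two,
      hjMatrix_nil, Matrix.mul_one, hjStep, tMatrix, Matrix.mul_fin_two]
    push_cast
    ring_nf

theorem exists_inTd_hjMatrix_eq_tMatrix {d : ℕ} (hd : 1 ≤ d) (n a : ℤ) (hn : 2 ≤ n)
    (ha : 0 < a) (han : a < n) (hcop : IsCoprime a n) :
    ∃ c, InTd d c ∧ hjMatrix c = tMatrix d n a := by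
  rcases lt_trichotomy (2 * a) n with h | h | h
  · have hcop' : IsCoprime a (n - a) := by
      simpa [sub_eq_add_neg] using hcop.add_mul_left_right (-1)
    obtain ⟨c, hc, hmat⟩ :=
      exists_inTd_hjMatrix_eq_tMatrix hd (n - a) a (by omega) ha (by omega) hcop'
    refine ⟨plusFirst c ++ [2], hc.right, ?_⟩
    rw [hjMatrix_append, hjMatrix_plusFirst hc.ne_nil, hmat, ← tMatrix_right d n a]
    simp [hjMatrix]
  · obtain rfl : a = 1 := by
      rcases Int.isUnit_iff.mp (hcop.isUnit_of_dvd ⟨2, by omega⟩) with h | h <;> omega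
    obtain rfl : n = 2 := by omega
    exact ⟨_, InTd.init, hjMatrix_init hd⟩
  · have hcop' : IsCoprime (2 * a - n) a := by
      simpa [mul_comm] using (IsCoprime.mul_sub_left_left_iff (z := 2)).mpr hcop.symm
    obtain ⟨c, hc, hmat⟩ :=
      exists_inTd_hjMatrix_eq_tMatrix hd a (2 * a - n) (by omega) (by omega) (by omega) hcop'
    refine ⟨2 :: plusLast c, hc.left, ?_⟩
    rw [hjMatrix_cons, hjMatrix_plusLast hc.ne_nil, hmat, tMatrix_left]
termination_by n.toNat
decreasing_by all_goals omega

/-- Every T-chain of type `(d,n,a)` is obtained from the initial chain by finitely many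
applications of the two augmentation operations. -/
theorem t_chain_generation (d : ℕ) (hd : 1 ≤ d) (n a : ℤ) (hn : 2 ≤ n)
    (ha0 : 0 < a) (han : a < n) (hgcd : Int.gcd a n = 1)
    (e : List ℤ) (he2 : ∀ x ∈ e, 2 ≤ x)
    (hval : hjVal e = (((d : ℤ) * n ^ 2 : ℤ) : ℚ) / (((d : ℤ) * n * a - 1 : ℤ) : ℚ)) :
    InTd d e := by
  obtain ⟨c, hc, hmat⟩ := exists_inTd_hjMatrix_eq_tMatrix hd n a hn ha0 han
    (Int.isCoprime_iff_gcd_eq_one.mpr hgcd)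
  have hvalc : hjVal c = hjVal e := by
    rw [hval, hjVal_eq_div c hc.two_le, hmat]
    simp [tMatrix]
  rwa [hjVal_injOn hc.two_le he2 hvalc] at hc
end

section
/- Let (e_1,...,e_r) be a T-chain of type (d,n,a) with discrepancies delta_1,...,delta_r. Then there exist positive integers t_1,...,t_r such that delta_i = -1 + t_i/n for every i, and t_1 + t_r = n. Moreover, the discrepancies of the T-chain (e_1 + 1, e_2, ..., e_r, 2) are, in order, -1 + t_1/(n+t_1), ..., -1 + t_r/(n+t_1), -1 + (t_1+t_r)/(n+t_1); and the discrepancies of the T-chain (2, e_1, ..., e_{r-1}, e_r + 1) are, in order, -1 + (t_1+t_r)/(n+t_r), -1 + t_1/(n+t_r), ..., -1 + t_r/(n+t_r). -/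
/-- `δ` (indexed `1,...,r` with the convention `δ 0 = δ (r+1) = 0`) is the sequence of
discrepancies of the chain `e = (e₁,...,e_r)`:
`δ_{i-1} - e_i δ_i + δ_{i+1} = e_i - 2` for `1 ≤ i ≤ r`. -/
def IsDiscrepancy (e : List ℤ) (δ : ℕ → ℚ) : Prop :=
  δ 0 = 0 ∧ δ (e.length + 1) = 0 ∧
  ∀ i : ℕ, 1 ≤ i → i ≤ e.length →
    δ (i - 1) - (e.getD (i - 1) 0 : ℚ) * δ i + δ (i + 1)
      = (e.getD (i - 1) 0 : ℚ) - 2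

/-!
Writing `δ_i = -1 + s_i`, the discrepancy equations say that `s` solves the linear recurrence
`s_{i-1} + s_{i+1} = e_i s_i` with `s_0 = s_{r+1} = 1`; since all `e_i ≥ 2`, a solution vanishing
at both ends vanishes identically, so such boundary problems have unique solutions.

For a T-chain let `u`, `v` be the solutions with `(u_0, u_1) = (0, 1)` and
`(v_r, v_{r+1}) = (1, 0)`. The `v_i` are continuants and `[e_1, …, e_r] = v_0 / v_1` in lowest
terms, so `v_0 = dn²` and `v_1 = dna - 1`. The integral solution `t` with `(t_0, t_1) = (n, a)`
then satisfies `dn t = u + v`, whence `t_i > 0`, `t_{r+1} = n` and `0 < t_r ≤ n`; as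
`t_r ≡ -a` modulo `n`, `t_r = n - a`. Thus `δ = -1 + t / n`. For the two augmented chains one
takes `t`, shifted by one in the second case, with the boundary values replaced by `n + t_1`
resp. `n + t_r`.
-/

/-- Solutions of `x_{i-1} - e_i x_i + x_{i+1} = 0` for `1 ≤ i ≤ r`; the list `e` is indexed
from `0`. -/
def hjSolutions (R : Type*) [CommRing R] (e : List ℤ) : Submodule R (ℕ → R) where
  carrier := {x | ∀ j < e.length, x j + x (j + 2) = e.getD j 0 * x (j + 1)}
  add_mem' {x y} hx hy j hj := by
    simp only [Pi.add_apply]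
    linear_combination hx j hj + hy j hj
  zero_mem' j _ := by simp
  smul_mem' c x hx j hj := by
    simp only [Pi.smul_apply, smul_eq_mul]
    linear_combination c * hx j hj

theorem two_le_getD {e : List ℤ} (he2 : ∀ x ∈ e, 2 ≤ x) {j : ℕ} (hj : j < e.length) :
    2 ≤ e.getD j 0 := by
  rw [List.getD_eq_getElem e 0 hj]
  exact he2 _ (List.getElem_mem hj)

namespace hjSolutions

variable {R : Type*} [CommRing R] {e : List ℤ} {x y : ℕ → R}

theorem intCast_mem {t : ℕ → ℤ} (ht : t ∈ hjSolutions ℤ e) :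
    (fun i => (t i : R)) ∈ hjSolutions R e := fun j hj => by
  simpa using congrArg (Int.cast : ℤ → R) (ht j hj)

theorem eq_of_apply_zero_of_apply_one (hx : x ∈ hjSolutions R e) (hy : y ∈ hjSolutions R e)
    (h0 : x 0 = y 0) (h1 : x 1 = y 1) : ∀ i ≤ e.length + 1, x i = y i := by
  have key : ∀ i ≤ e.length, x i = y i ∧ x (i + 1) = y (i + 1) := by
    intro i hi
    induction i with
    | zero => exact ⟨h0, h1⟩
    | succ i ih =>
      obtain ⟨hi0, hi1⟩ := ih (by omega)
      refine ⟨hi1, ?_⟩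
      linear_combination hx i (by omega) - hy i (by omega) - hi0 + (e.getD i 0 : R) * hi1
  intro i hi
  rcases i with _ | k
  · exact h0
  · exact (key k (by omega)).2

theorem wronskian (hx : x ∈ hjSolutions R e) (hy : y ∈ hjSolutions R e) :
    ∀ i ≤ e.length, x (i + 1) * y i - x i * y (i + 1) = x 1 * y 0 - x 0 * y 1 := by
  intro i hi
  induction i with
  | zero => rfl
  | succ i ih =>
    rw [← ih (by omega)]
    linear_combination y (i + 1) * hx i (by omega) - x (i + 1) * hy i (by omega)

section Ordered

variable [LinearOrder R] [IsStrictOrderedRing R]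

theorem lt_apply_succ (he2 : ∀ x ∈ e, 2 ≤ x) (hx : x ∈ hjSolutions R e) (h0 : 0 ≤ x 0)
    (h01 : x 0 < x 1) : ∀ i ≤ e.length, 0 ≤ x i ∧ x i < x (i + 1) := by
  intro i hi
  induction i with
  | zero => exact ⟨h0, h01⟩
  | succ i ih =>
    obtain ⟨hi0, hi1⟩ := ih (by omega)
    have he : (2 : R) ≤ e.getD i 0 := by exact_mod_cast two_le_getD he2 (by omega)
    refine ⟨by linarith, ?_⟩
    -- second differences are `(e_i - 2) x_i ≥ 0`
    nlinarith [hx i (by omega)]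

theorem eq_of_apply_zero_of_apply_length_succ (he2 : ∀ x ∈ e, 2 ≤ x) (hx : x ∈ hjSolutions R e)
    (hy : y ∈ hjSolutions R e) (h0 : x 0 = y 0) (hr : x (e.length + 1) = y (e.length + 1)) :
    ∀ i ≤ e.length + 1, x i = y i := by
  have hz := sub_mem hx hy
  have hz0 : (x - y) 0 = 0 := sub_eq_zero.mpr h0
  have hzr : (x - y) (e.length + 1) = 0 := sub_eq_zero.mpr hr
  have hz1 : (x - y) 1 = 0 := by
    rcases lt_trichotomy ((x - y) 1) 0 with hneg | hzero | hpos
    · have := lt_apply_succ he2 (neg_mem hz) (by simp [hz0]) (by simpa [hz0] using hneg)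
        e.length le_rfl
      simp only [Pi.neg_apply, hzr] at this
      linarith
    · exact hzero
    · have := lt_apply_succ he2 hz hz0.ge (by rwa [hz0]) e.length le_rfl
      linarith
  intro i hi
  have := eq_of_apply_zero_of_apply_one hz (zero_mem _) hz0 hz1 i hi
  exact sub_eq_zero.mp this

end Ordered

end hjSolutions

def hjForward {R : Type*} [CommRing R] (e : List ℤ) (x₀ x₁ : R) : ℕ → R
  | 0 => x₀
  | 1 => x₁
  | i + 2 => e.getD i 0 * hjForward e x₀ x₁ (i + 1) - hjForward e x₀ x₁ i

theorem hjForward_mem {R : Type*} [CommRing R] (e : List ℤ) (x₀ x₁ : R) :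
    hjForward e x₀ x₁ ∈ hjSolutions R e := fun j _ => by
  rw [hjForward]
  ring

/-- `hjBackward e i` is the continuant of `(e_{i+1}, …, e_r)`, i.e. the solution with values
`1, 0` at `r, r + 1`. -/
def hjBackward : List ℤ → ℕ → ℤ
  | [], 0 => 1
  | [], _ + 1 => 0
  | x :: l, 0 => x * hjBackward l 0 - hjBackward l 1
  | _ :: l, i + 1 => hjBackward l i

theorem hjBackward_mem (e : List ℤ) : hjBackward e ∈ hjSolutions ℤ e := by
  induction e with
  | nil => intro j hj; simp at hj
  | cons x l ih =>
    rintro (_ | j) hj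
    · simp [hjBackward]
    · simpa [hjBackward] using ih j (by simpa using hj)

theorem hjBackward_length (e : List ℤ) : hjBackward e e.length = 1 := by
  induction e with
  | nil => rfl
  | cons x l ih => exact ih

theorem hjBackward_length_succ (e : List ℤ) : hjBackward e (e.length + 1) = 0 := by
  induction e with
  | nil => rfl
  | cons x l ih => exact ih

theorem isCoprime_hjBackward (e : List ℤ) : IsCoprime (hjBackward e 0) (hjBackward e 1) := by
  induction e with
  | nil => exact isCoprime_one_left
  | cons x l ih =>
    obtain ⟨u, v, huv⟩ := ih
    exact ⟨-v, u + v * x, by simp only [hjBackward]; linear_combination huv⟩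

theorem hjBackward_one_nonneg_lt_zero {e : List ℤ} (he2 : ∀ x ∈ e, 2 ≤ x) :
    0 ≤ hjBackward e 1 ∧ hjBackward e 1 < hjBackward e 0 := by
  induction e with
  | nil => simp [hjBackward]
  | cons x l ih =>
    obtain ⟨h1, h10⟩ := ih fun y hy => he2 y (List.mem_cons_of_mem x hy)
    have hx := he2 x List.mem_cons_self
    simp only [hjBackward]
    constructor <;> nlinarith

theorem hjBackward_nonneg {e : List ℤ} (he2 : ∀ x ∈ e, 2 ≤ x) (i : ℕ) : 0 ≤ hjBackward e i := by
  induction e generalizing i with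
  | nil => cases i <;> simp [hjBackward]
  | cons x l ih =>
    cases i with
    | zero =>
      obtain ⟨h1, h10⟩ := hjBackward_one_nonneg_lt_zero he2
      exact h1.trans h10.le
    | succ i => exact ih (fun y hy => he2 y (List.mem_cons_of_mem x hy)) i

theorem hjVal_eq_hjBackward_div {e : List ℤ} (he2 : ∀ x ∈ e, 2 ≤ x) :
    hjVal e = hjBackward e 0 / hjBackward e 1 := by
  induction e with
  | nil => simp [hjVal, hjBackward]
  | cons x l ih =>
    have hl : ∀ y ∈ l, 2 ≤ y := fun y hy => he2 y (List.mem_cons_of_mem x hy)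
    obtain ⟨h1, h10⟩ := hjBackward_one_nonneg_lt_zero hl
    have hpos : (0 : ℚ) < hjBackward l 0 := by exact_mod_cast h1.trans_lt h10
    rw [hjVal, ih hl, one_div_div]
    simp only [hjBackward]
    push_cast
    field_simp

theorem hjBackward_eq_of_hjVal_eq {e : List ℤ} (he2 : ∀ x ∈ e, 2 ≤ x) {N q : ℤ} (hN : 0 < N)
    (hq : 0 < q) (hcop : IsCoprime N q) (h : hjVal e = N / q) :
    hjBackward e 0 = N ∧ hjBackward e 1 = q := by
  rw [hjVal_eq_hjBackward_div he2] at h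
  have hb1 : 0 < hjBackward e 1 := by
    refine (hjBackward_one_nonneg_lt_zero he2).1.lt_of_ne fun h0 => ?_
    rw [← h0, Int.cast_zero, div_zero, eq_comm] at h
    have : (0 : ℚ) < N / q := by positivity
    exact this.ne' h
  exact Rat.div_int_inj hb1 hq (Int.isCoprime_iff_gcd_eq_one.mp (isCoprime_hjBackward e))
    (Int.isCoprime_iff_gcd_eq_one.mp hcop) h

theorem hjSolutions.apply_length_succ {e : List ℤ} {x : ℕ → ℤ} (hx : x ∈ hjSolutions ℤ e) :
    x (e.length + 1) = x 1 * hjBackward e 0 - x 0 * hjBackward e 1 := by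
  have := hjSolutions.wronskian hx (hjBackward_mem e) e.length le_rfl
  rwa [hjBackward_length, hjBackward_length_succ, mul_one, mul_zero, sub_zero] at this

theorem plusLast_concat (l : List ℤ) (x : ℤ) : plusLast (l ++ [x]) = l ++ [x + 1] := by
  induction l with
  | nil => rfl
  | cons y l ih =>
    rcases l with _ | ⟨z, l⟩
    · rfl
    · simpa [plusLast] using ih

theorem length_plusFirst (e : List ℤ) : (plusFirst e).length = e.length := by
  cases e <;> rfl

theorem length_plusLast (e : List ℤ) : (plusLast e).length = e.length := by
  rcases List.eq_nil_or_concat' e with rfl | ⟨l, x, rfl⟩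
  · rfl
  · simp [plusLast_concat]

theorem two_le_of_mem_plusFirst_append_two {e : List ℤ} (he2 : ∀ x ∈ e, 2 ≤ x) :
    ∀ y ∈ plusFirst e ++ [2], 2 ≤ y := by
  rcases e with _ | ⟨x, l⟩
  · simp [plusFirst]
  · have := he2 x List.mem_cons_self
    simp only [plusFirst, List.cons_append, List.mem_cons, List.mem_append,
      List.mem_nil_iff, or_false]
    rintro y (rfl | hy | rfl)
    · omega
    · exact he2 y (List.mem_cons_of_mem x hy)
    · exact le_rfl

theorem two_le_of_mem_cons_two_plusLast {e : List ℤ} (he2 : ∀ x ∈ e, 2 ≤ x) :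
    ∀ y ∈ 2 :: plusLast e, 2 ≤ y := by
  rcases List.eq_nil_or_concat' e with rfl | ⟨l, x, rfl⟩
  · simp [plusLast]
  · have := he2 x (by simp)
    simp only [plusLast_concat, List.mem_cons, List.mem_append,
      List.mem_nil_iff, or_false]
    rintro y (rfl | hy | rfl)
    · exact le_rfl
    · exact he2 y (by simp [hy])
    · omega

theorem hjSolutions.plusFirst_append_two_mem {R : Type*} [CommRing R] {e : List ℤ} (he : e ≠ [])
    {t : ℕ → R} (ht : t ∈ hjSolutions R e) :
    (fun i => if i = 0 then t 0 + t 1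
      else if i = e.length + 2 then 2 * t (e.length + 1) - t e.length else t i)
      ∈ hjSolutions R (plusFirst e ++ [2]) := by
  obtain ⟨x, l, rfl⟩ := List.exists_cons_of_ne_nil he
  intro j hj
  simp only [plusFirst, List.cons_append, List.length_cons, List.length_append,
    List.length_nil, zero_add] at hj ⊢
  rcases j with _ | j
  · have h0 : t 0 + t 2 = x * t 1 := ht 0 (by simp)
    simp (disch := omega) only [if_neg, List.getD_cons_zero]
    push_cast
    linear_combination h0
  · rcases Nat.lt_or_ge j l.length with hjl | hjl
    · simp (disch := omega) only [if_neg, List.getD_cons_succ, List.getD_append _ _ _ _ hjl]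
      exact ht (j + 1) (by simp; omega)
    · obtain rfl : j = l.length := by omega
      simp

theorem hjSolutions.cons_two_plusLast_mem {R : Type*} [CommRing R] {e : List ℤ} (he : e ≠ [])
    {t : ℕ → R} (ht : t ∈ hjSolutions R e) :
    (fun i => if i = 0 then 2 * t 0 - t 1
      else if i = e.length + 2 then t e.length + t (e.length + 1) else t (i - 1))
      ∈ hjSolutions R (2 :: plusLast e) := by
  obtain ⟨l, x, rfl⟩ := (List.eq_nil_or_concat' _).resolve_left he
  rw [plusLast_concat]
  intro j hj
  simp only [List.length_cons, List.length_append, List.length_nil, zero_add] at hj ⊢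
  rcases j with _ | j
  · simp
  · rcases Nat.lt_or_ge j l.length with hjl | hjl
    · have := ht j (by simp; omega)
      simp (disch := omega) only [if_neg, List.getD_cons_succ, List.getD_append _ _ _ _ hjl,
        Nat.add_sub_cancel] at this ⊢
      exact this
    · obtain rfl : j = l.length := by omega
      have := ht l.length (by simp)
      simp (disch := omega) only [if_neg, List.getD_cons_succ, List.getD_append_right,
        Nat.sub_self, List.getD_cons_zero, Nat.add_sub_cancel] at this ⊢
      push_cast
      linear_combination this

theorem IsDiscrepancy.add_one_mem {e : List ℤ} {δ : ℕ → ℚ} (hδ : IsDiscrepancy e δ) :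
    (fun i => δ i + 1) ∈ hjSolutions ℚ e := fun j hj => by
  have := hδ.2.2 (j + 1) (by omega) (by omega)
  simp only [Nat.add_sub_cancel] at this
  linear_combination this

theorem IsDiscrepancy.eq_neg_one_add_div {e : List ℤ} (he2 : ∀ x ∈ e, 2 ≤ x) {δ : ℕ → ℚ}
    (hδ : IsDiscrepancy e δ) {t : ℕ → ℤ} (ht : t ∈ hjSolutions ℤ e) {m : ℤ} (hm : m ≠ 0)
    (h0 : t 0 = m) (hr : t (e.length + 1) = m) :
    ∀ i ≤ e.length + 1, δ i = -1 + t i / m := by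
  have hm' : (m : ℚ) ≠ 0 := by exact_mod_cast hm
  have hy := Submodule.smul_mem _ (m : ℚ)⁻¹ (hjSolutions.intCast_mem (R := ℚ) ht)
  intro i hi
  have := hjSolutions.eq_of_apply_zero_of_apply_length_succ he2 hδ.add_one_mem hy
    (by simp [hδ.1, h0, hm']) (by simp [hδ.2.1, hr, hm']) i hi
  simp only [Pi.smul_apply, smul_eq_mul] at this
  rw [div_eq_inv_mul]
  linarith

theorem IsDiscrepancy.plusFirst_append_two {e : List ℤ} (he2 : ∀ x ∈ e, 2 ≤ x) (he : e ≠ [])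
    {t : ℕ → ℤ} (ht : t ∈ hjSolutions ℤ e) {m : ℤ} (h0 : t 0 = m) (hr : t (e.length + 1) = m)
    (hsum : t 1 + t e.length = m) (hm : m + t 1 ≠ 0) {δ : ℕ → ℚ}
    (hδ : IsDiscrepancy (plusFirst e ++ [2]) δ) :
    ∀ i, 1 ≤ i → i ≤ e.length + 1 → δ i = -1 + t i / ((m + t 1 : ℤ) : ℚ) := by
  have := hδ.eq_neg_one_add_div (two_le_of_mem_plusFirst_append_two he2)
    (hjSolutions.plusFirst_append_two_mem he ht) hm (by simp [h0])
    (by simp [length_plusFirst]; linear_combination 2 * hr - hsum)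
  intro i hi1 hi2
  rw [this i (by simp [length_plusFirst]; omega), if_neg (by omega), if_neg (by omega)]

theorem IsDiscrepancy.cons_two_plusLast {e : List ℤ} (he2 : ∀ x ∈ e, 2 ≤ x) (he : e ≠ [])
    {t : ℕ → ℤ} (ht : t ∈ hjSolutions ℤ e) {m : ℤ} (h0 : t 0 = m) (hr : t (e.length + 1) = m)
    (hsum : t 1 + t e.length = m) (hm : m + t e.length ≠ 0) {δ : ℕ → ℚ}
    (hδ : IsDiscrepancy (2 :: plusLast e) δ) :
    ∀ i ≤ e.length, δ (i + 1) = -1 + t i / ((m + t e.length : ℤ) : ℚ) := by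
  have := hδ.eq_neg_one_add_div (two_le_of_mem_cons_two_plusLast he2)
    (hjSolutions.cons_two_plusLast_mem he ht) hm
    (by simp; linear_combination 2 * h0 - hsum) (by simp [length_plusLast]; linear_combination hr)
  intro i hi
  rw [this (i + 1) (by simp [length_plusLast]; omega), if_neg (by omega), if_neg (by omega),
    Nat.add_sub_cancel]

structure IsTChain_s3 (e : List ℤ) (d n a : ℤ) : Prop where
  one_le_d : 1 ≤ d
  a_pos : 0 < a
  a_lt : a < n
  two_le : ∀ x ∈ e, 2 ≤ x
  hjVal_eq : hjVal e = ((d * n ^ 2 : ℤ) : ℚ) / ((d * n * a - 1 : ℤ) : ℚ)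

namespace IsTChain_s3

variable {e : List ℤ} {d n a : ℤ}

theorem hjBackward_zero_one (h : IsTChain_s3 e d n a) :
    hjBackward e 0 = d * n ^ 2 ∧ hjBackward e 1 = d * n * a - 1 := by
  have hd : 0 < d := by linarith [h.one_le_d]
  have hn : 0 < n := h.a_pos.trans h.a_lt
  have hda : 1 ≤ d * a := by nlinarith [h.a_pos]
  refine hjBackward_eq_of_hjVal_eq h.two_le (by positivity)
    (by nlinarith [mul_nonneg (sub_nonneg.mpr hda) hn.le, h.a_lt])
    ⟨d * a ^ 2, -(d * n * a + 1), by ring⟩ h.hjVal_eq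

theorem hjForward_length_succ (h : IsTChain_s3 e d n a) :
    hjForward e n a (e.length + 1) = n := by
  rw [hjSolutions.apply_length_succ (hjForward_mem e n a), h.hjBackward_zero_one.1,
    h.hjBackward_zero_one.2]
  simp only [hjForward]
  ring

theorem mul_hjForward (h : IsTChain_s3 e d n a) : ∀ i ≤ e.length + 1,
    d * n * hjForward e n a i = hjForward e 0 1 i + hjBackward e i :=
  hjSolutions.eq_of_apply_zero_of_apply_one (Submodule.smul_mem _ (d * n) (hjForward_mem e n a))
    (add_mem (hjForward_mem e 0 1) (hjBackward_mem e))
    (by simp [hjForward, h.hjBackward_zero_one.1]; ring)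
    (by simp [hjForward, h.hjBackward_zero_one.2])

theorem hjForward_pos (h : IsTChain_s3 e d n a) :
    ∀ i, 1 ≤ i → i ≤ e.length → 0 < hjForward e n a i := by
  intro i hi1 hi2
  have hdn : 0 < d * n := by nlinarith [h.one_le_d, h.a_pos, h.a_lt]
  obtain ⟨k, rfl⟩ : ∃ k, i = k + 1 := ⟨i - 1, by omega⟩
  have hu := hjSolutions.lt_apply_succ h.two_le (hjForward_mem e (0 : ℤ) 1) le_rfl zero_lt_one k
    (by omega)
  have := h.mul_hjForward (k + 1) (by omega)
  have := hjBackward_nonneg h.two_le (k + 1)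
  exact pos_of_mul_pos_right (by linarith) hdn.le

theorem hjForward_length (h : IsTChain_s3 e d n a) : hjForward e n a e.length = n - a := by
  set r := e.length
  set t := hjForward e n a
  set u := hjForward e (0 : ℤ) 1
  have hdn : 0 < d * n := by nlinarith [h.one_le_d, h.a_pos, h.a_lt]
  have hu : 0 ≤ u r ∧ u r < u (r + 1) :=
    hjSolutions.lt_apply_succ h.two_le (hjForward_mem e 0 1) le_rfl zero_lt_one r le_rfl
  have hur : u (r + 1) = d * n * n := by
    have := hjSolutions.apply_length_succ (hjForward_mem e (0 : ℤ) 1)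
    simp only [hjForward, h.hjBackward_zero_one.1] at this
    linear_combination this
  have htr : d * n * t r = u r + 1 := by
    rw [h.mul_hjForward r (by omega), hjBackward_length]
  -- `t = n p + a u` with `p` integral, so `t_r ≡ a u_r ≡ -a` modulo `n`
  have htp : t r = n * hjForward e 1 0 r + a * u r := hjSolutions.eq_of_apply_zero_of_apply_one
    (hjForward_mem e n a)
    (add_mem (Submodule.smul_mem _ n (hjForward_mem e (1 : ℤ) 0))
      (Submodule.smul_mem _ a (hjForward_mem e 0 1)))
    (by simp [hjForward]) (by simp [hjForward]) r (by omega)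
  have hdvd : n ∣ t r + a - n :=
    ⟨hjForward e 1 0 r + a * d * t r - 1, by linear_combination htp - a * htr⟩
  have hpos : 0 < t r := pos_of_mul_pos_right (by linarith) hdn.le
  have hle : t r ≤ n := le_of_mul_le_mul_left (by linarith) hdn
  have := Int.eq_zero_of_abs_lt_dvd hdvd (abs_lt.mpr ⟨by linarith [h.a_pos], by linarith [h.a_lt]⟩)
  linarith

end IsTChain_s3

theorem t_chain_discrepancies_general (d n a : ℤ) (hd : 1 ≤ d)
    (ha0 : 0 < a) (han : a < n)
    (e : List ℤ) (he2 : ∀ x ∈ e, 2 ≤ x)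
    (hval : hjVal e = ((d * n ^ 2 : ℤ) : ℚ) / ((d * n * a - 1 : ℤ) : ℚ))
    (δ : ℕ → ℚ) (hδ : IsDiscrepancy e δ) :
    ∃ t : ℕ → ℤ,
      (∀ i : ℕ, 1 ≤ i → i ≤ e.length → 0 < t i) ∧
      (∀ i : ℕ, 1 ≤ i → i ≤ e.length → δ i = -1 + (t i : ℚ) / (n : ℚ)) ∧
      t 1 + t e.length = n ∧
      (∀ δ' : ℕ → ℚ, IsDiscrepancy (plusFirst e ++ [2]) δ' →
        (∀ i : ℕ, 1 ≤ i → i ≤ e.length →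
          δ' i = -1 + (t i : ℚ) / ((n + t 1 : ℤ) : ℚ)) ∧
        δ' (e.length + 1)
          = -1 + ((t 1 + t e.length : ℤ) : ℚ) / ((n + t 1 : ℤ) : ℚ)) ∧
      (∀ δ'' : ℕ → ℚ, IsDiscrepancy (2 :: plusLast e) δ'' →
        δ'' 1 = -1 + ((t 1 + t e.length : ℤ) : ℚ) / ((n + t e.length : ℤ) : ℚ) ∧
        (∀ i : ℕ, 1 ≤ i → i ≤ e.length →
          δ'' (i + 1) = -1 + (t i : ℚ) / ((n + t e.length : ℤ) : ℚ))) := by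
  have h : IsTChain_s3 e d n a := ⟨hd, ha0, han, he2, hval⟩
  have ht := hjForward_mem e n a
  have hpos := h.hjForward_pos
  have h0 : hjForward e n a 0 = n := rfl
  have h1 : hjForward e n a 1 = a := rfl
  have hr := h.hjForward_length_succ
  have hsum : hjForward e n a 1 + hjForward e n a e.length = n := by
    rw [h.hjForward_length]
    exact add_sub_cancel a n
  have he : e ≠ [] := by
    rintro rfl
    have : hjForward [] n a 0 = n - a := h.hjForward_length
    omega
  generalize hjForward e n a = t at ht hpos h0 h1 hr hsum
  refine ⟨t, hpos, fun i _ hi => hδ.eq_neg_one_add_div he2 ht (by omega) h0 hr i (by omega),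
    hsum, fun δ' hδ' => ⟨fun i hi1 hi2 => ?_, ?_⟩, fun δ'' hδ'' => ⟨?_, ?_⟩⟩
  · exact hδ'.plusFirst_append_two he2 he ht h0 hr hsum (by omega) i hi1 (by omega)
  · rw [hδ'.plusFirst_append_two he2 he ht h0 hr hsum (by omega) _ (by omega) le_rfl, hr, hsum]
  · rw [hδ''.cons_two_plusLast he2 he ht h0 hr hsum (by omega) 0 (by omega), h0, hsum]
  · exact fun i _ hi => hδ''.cons_two_plusLast he2 he ht h0 hr hsum (by omega) i hi

/-- For a T-chain of type `(d,n,a)` the discrepancies are `δ_i = -1 + t_i/n` with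
`t_i > 0` and `t_1 + t_r = n`; and the discrepancies of the two augmented T-chains
`(e₁+1,e₂,...,e_r,2)` and `(2,e₁,...,e_{r-1},e_r+1)` are as stated. -/
theorem t_chain_discrepancies (d n a : ℤ) (hd : 1 ≤ d) (hn : 2 ≤ n)
    (ha0 : 0 < a) (han : a < n) (hgcd : Int.gcd a n = 1)
    (e : List ℤ) (he2 : ∀ x ∈ e, 2 ≤ x)
    (hval : hjVal e = ((d * n ^ 2 : ℤ) : ℚ) / ((d * n * a - 1 : ℤ) : ℚ))
    (δ : ℕ → ℚ) (hδ : IsDiscrepancy e δ) :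
    ∃ t : ℕ → ℤ,
      (∀ i : ℕ, 1 ≤ i → i ≤ e.length → 0 < t i) ∧
      (∀ i : ℕ, 1 ≤ i → i ≤ e.length → δ i = -1 + (t i : ℚ) / (n : ℚ)) ∧
      t 1 + t e.length = n ∧
      (∀ δ' : ℕ → ℚ, IsDiscrepancy (plusFirst e ++ [2]) δ' →
        (∀ i : ℕ, 1 ≤ i → i ≤ e.length →
          δ' i = -1 + (t i : ℚ) / ((n + t 1 : ℤ) : ℚ)) ∧
        δ' (e.length + 1)
          = -1 + ((t 1 + t e.length : ℤ) : ℚ) / ((n + t 1 : ℤ) : ℚ)) ∧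
      (∀ δ'' : ℕ → ℚ, IsDiscrepancy (2 :: plusLast e) δ'' →
        δ'' 1 = -1 + ((t 1 + t e.length : ℤ) : ℚ) / ((n + t e.length : ℤ) : ℚ) ∧
        (∀ i : ℕ, 1 ≤ i → i ≤ e.length →
          δ'' (i + 1) = -1 + (t i : ℚ) / ((n + t e.length : ℤ) : ℚ))) :=
  t_chain_discrepancies_general d n a hd ha0 han e he2 hval δ hδ
end

section
/- Let n >= 2 and 0 < a < n be integers with gcd(a,n) = 1, and set m = n^2 and q = n*a - 1. Call a pair (m0, q0) of positive integers of Wahl type if there exist an integer n' >= 2 and 0 < a' < n' with gcd(a',n') = 1 such that m0 = n'^2 and q0 is congruent to n'*a' - 1 modulo m0. Then: (a) q is not equal to m - 1; (b) neither (2m, q) nor (2m, m+q) is of Wahl type; (c) (m, 2q) is not of Wahl type; (d) if m is even, then m/2 is not a perfect square, so (m/2, q) is not of Wahl type; (e) if q^2 is congruent to 1 modulo m and q is not equal to m - 1, then, setting u = gcd(q+1, m), the pair (m/u, (q+1)/u) is not of Wahl type. -/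
lemma nat_two_mul_sq_ne_sq (j k : ℕ) (hj : j ≠ 0) : 2 * j ^ 2 ≠ k ^ 2 := by
  intro h
  have hk : k ≠ 0 := by
    rintro rfl
    simp [pow_eq_zero_iff] at h
    omega
  have h2 := congrArg (fun x => x.factorization 2) h
  simp [Nat.factorization_mul (by norm_num : (2:ℕ) ≠ 0) (pow_ne_zero 2 hj),
    Nat.factorization_pow, Nat.Prime.factorization Nat.prime_two] at h2
  omega

lemma int_two_mul_sq_ne_sq (j k : ℤ) (hj : j ≠ 0) : 2 * j ^ 2 ≠ k ^ 2 := by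
  intro h
  apply nat_two_mul_sq_ne_sq j.natAbs k.natAbs (Int.natAbs_ne_zero.mpr hj)
  have := congrArg Int.natAbs h
  simpa [Int.natAbs_mul, Int.natAbs_pow] using this



/-- `(m0, q0)` encodes a Wahl singularity `(1/n'^2)(1, n'a' - 1)`: `m0 = n'^2` and
`q0 ≡ n'a' - 1 (mod m0)` for some `n' ≥ 2`, `0 < a' < n'` with `gcd(a',n') = 1`. -/
def WahlPair (m0 q0 : ℤ) : Prop :=
  ∃ n' a' : ℤ, 2 ≤ n' ∧ 0 < a' ∧ a' < n' ∧ Int.gcd a' n' = 1 ∧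
    m0 = n' ^ 2 ∧ q0 ≡ n' * a' - 1 [ZMOD m0]

/-- Arithmetic content of: the quotient of a Wahl singularity by an involution is never
a Wahl singularity or a smooth point. With `(m,q) = (n², na-1)`: (a) `q ≠ m-1`;
(b) `(2m,q)` and `(2m,m+q)` are not of Wahl type; (c) `(m,2q)` is not of Wahl type;
(d) if `m` is even, `m/2` is not a square, so `(m/2,q)` is not of Wahl type;
(e) if `q² ≡ 1 (mod m)` and `q ≠ m-1` then, with `u = gcd(q+1,m)`, the pair
`(m/u, (q+1)/u)` is not of Wahl type. -/
theorem wahl_involution_quotient (n a : ℤ) (hn : 2 ≤ n) (ha0 : 0 < a) (han : a < n)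
    (hgcd : Int.gcd a n = 1) (m q : ℤ) (hm : m = n ^ 2) (hq : q = n * a - 1) :
    q ≠ m - 1 ∧
    (¬ WahlPair (2 * m) q ∧ ¬ WahlPair (2 * m) (m + q)) ∧
    ¬ WahlPair m (2 * q) ∧
    (2 ∣ m → (¬ ∃ k : ℤ, m / 2 = k ^ 2) ∧ ¬ WahlPair (m / 2) q) ∧
    (q ^ 2 ≡ 1 [ZMOD m] → q ≠ m - 1 →
      ¬ WahlPair (m / (Int.gcd (q + 1) m : ℤ)) ((q + 1) / (Int.gcd (q + 1) m : ℤ))) := by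
  have hn0 : n ≠ 0 := by omega
  refine ⟨?_, ⟨?_, ?_⟩, ?_, ?_, ?_⟩
  · -- (a)
    intro h
    have : n * a = n * n := by rw [hq, hm] at h; ring_nf at h ⊢; nlinarith [h]
    have : a = n := mul_left_cancel₀ hn0 this
    omega
  · -- (b1)
    rintro ⟨n', a', hn', -, -, -, hm0, -⟩
    exact int_two_mul_sq_ne_sq n n' hn0 (by rw [← hm, hm0])
  · -- (b2)
    rintro ⟨n', a', hn', -, -, -, hm0, -⟩
    exact int_two_mul_sq_ne_sq n n' hn0 (by rw [← hm, hm0])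
  · -- (c)
    rintro ⟨n', a', hn', ha'0, ha'n, hg', hm0, hcong⟩
    have hnn' : n = n' := by
      have h2 : n ^ 2 = n' ^ 2 := by rw [← hm, hm0]
      nlinarith [sq_nonneg (n - n'), sq_nonneg (n + n')]
    subst hnn'
    have hdvd : m ∣ (n * a' - 1) - 2 * q := hcong.dvd
    rw [hm, hq] at hdvd
    obtain ⟨c, hc⟩ := hdvd
    have h1 : n ∣ 1 := ⟨n * c - a' + 2 * a, by linear_combination hc⟩
    have := Int.le_of_dvd one_pos h1
    omega
  · -- (d)
    intro h2m
    have h2n : (2 : ℤ) ∣ n := by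
      have : (2 : ℤ) ∣ n ^ 2 := hm ▸ h2m
      exact Int.Prime.dvd_pow' (by norm_num) this
    obtain ⟨t, ht⟩ := h2n
    have ht0 : t ≠ 0 := by rintro rfl; omega
    have hm2 : m / 2 = 2 * t ^ 2 := by
      rw [hm, ht]
      have : (2 * t) ^ 2 = 2 * (2 * t ^ 2) := by ring
      rw [this, Int.mul_ediv_cancel_left _ (by norm_num)]
    constructor
    · rintro ⟨k, hk⟩
      rw [hm2] at hk
      exact int_two_mul_sq_ne_sq t k ht0 hk
    · rintro ⟨n', a', hn', -, -, -, hm0, -⟩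
      rw [hm2] at hm0
      exact int_two_mul_sq_ne_sq t n' ht0 hm0
  · -- (e)
    intro hq1 _
    have hdvd : m ∣ 1 - q ^ 2 := hq1.dvd
    rw [hm, hq] at hdvd
    obtain ⟨c, hc⟩ := hdvd
    -- n^2 * c = 1 - (n*a-1)^2 = 2*n*a - n^2*a^2, so n ∣ 2*a
    have hn2a : n ∣ 2 * a := ⟨a ^ 2 + c, by nlinarith [hc]⟩
    have hcop : Int.gcd n a = 1 := by rwa [Int.gcd_comm]
    have hn2 : n ∣ 2 := Int.dvd_of_dvd_mul_right_of_gcd_one (by rwa [mul_comm] at hn2a) hcop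
    have : n = 2 := by have := Int.le_of_dvd (by norm_num) hn2; omega
    subst this
    have ha1 : a = 1 := by omega
    subst ha1
    have hm4 : m = 4 := by norm_num [hm]
    have hq1' : q = 1 := by norm_num [hq]
    subst hm4; subst hq1'
    have hg : (Int.gcd (1 + 1) 4 : ℤ) = 2 := by decide
    rw [hg]
    norm_num
    rintro ⟨n', a', hn', -, -, -, hm0, -⟩
    nlinarith
end
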